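/- Let n ≥ 2, let Q ∈ SU_n with ζ(Q) := (1/(2π))·Σ_{j=1}^n arg(μ_j) ≥ 0 (where μ_1, …, μ_n are the eigenvalues of Q), and let X₀ ∈ Θ(Q). Then Θ(Q) = { U·X₀·Uᴴ : U an n×n unitary matrix with U·Q = Q·U }; i.e., Θ(Q) is the orbit of any of its elements under conjugation by the unitary matrices commuting with Q. -/

import Mathlib

/-!
Write `X ∈ su_n` as `V · diag(i λ) · Vᴴ` with `V` unitary and `λ` real, sorted. For a minimal
logarithm the spread `max λ - min λ` is at most `2π`: otherwise shifting the two extreme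
eigenvalues by `∓2π` gives a logarithm of `Q` with the same trace and smaller norm. Two real
spectra of spread `≤ 2π` and equal sums whose exponentials agree as multisets coincide: an integer
shift `k` of total zero between them must pair `k p = 1` with `k q = -1`, which only swaps the two
extreme values. Hence two minimal logarithms `X₀`, `Y` have the same sorted spectrum, so
`Y = U X₀ Uᴴ` for a unitary `U`, and `U` commutes with `Q` because `exp` commutes with conjugation.
-/

noncomputable section

open scoped Real Matrix
open Matrix

/-- The special unitary group `SU_n` as a set of matrices: `Q Qᴴ = 1` and `det Q = 1`. -/
def SpecialUnitary (n : ℕ) : Set (Matrix (Fin n) (Fin n) ℂ) :=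
  {Q | Q * Qᴴ = 1 ∧ Q.det = 1}

/-- The Lie algebra `su_n`: skew-hermitian traceless matrices. -/
def suSet (n : ℕ) : Set (Matrix (Fin n) (Fin n) ℂ) :=
  {X | Xᴴ = -X ∧ Matrix.trace X = 0}

/-- The squared Frobenius norm `‖X‖_φ² = trace (X Xᴴ)` (a real number). -/
def frobSq {n : ℕ} (X : Matrix (Fin n) (Fin n) ℂ) : ℝ :=
  (Matrix.trace (X * Xᴴ)).re

/-- `m(Q) = inf { ‖X‖_φ² : X ∈ su_n, exp X = Q }`. -/
def mQ {n : ℕ} (Q : Matrix (Fin n) (Fin n) ℂ) : ℝ :=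
  sInf {r : ℝ | ∃ X ∈ suSet n, NormedSpace.exp X = Q ∧ frobSq X = r}

/-- `Θ(Q)`: the set of minimizing `su_n`-logarithms of `Q`. -/
def ThetaQ {n : ℕ} (Q : Matrix (Fin n) (Fin n) ℂ) : Set (Matrix (Fin n) (Fin n) ℂ) :=
  {X | X ∈ suSet n ∧ NormedSpace.exp X = Q ∧ frobSq X = mQ Q}

/-- `su_n`-plog(Q): generalized principal `su_n`-logarithms of `Q`, i.e. `su_n`-logarithms
all of whose eigenvalues (roots of the characteristic polynomial) have imaginary part
in `[-π, π]`. -/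
def plog {n : ℕ} (Q : Matrix (Fin n) (Fin n) ℂ) : Set (Matrix (Fin n) (Fin n) ℂ) :=
  {X | X ∈ suSet n ∧ NormedSpace.exp X = Q ∧
    ∀ lam ∈ X.charpoly.roots, -π ≤ lam.im ∧ lam.im ≤ π}

open Complex Polynomial

section Combinatorics

variable {ι : Type*} [Fintype ι]

theorem exists_perm_apply_eq_of_map_eq {α : Type*} [DecidableEq α] {f g : ι → α}
    (h : Finset.univ.val.map f = Finset.univ.val.map g) :
    ∃ σ : Equiv.Perm ι, ∀ j, g (σ j) = f j := by
  have hfiber : ∀ a, Fintype.card {i // f i = a} = Fintype.card {i // g i = a} := fun a => by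
    simpa [Fintype.card_subtype, Multiset.count_map, Finset.card_def, eq_comm]
      using congrArg (Multiset.count a) h
  exact ⟨Equiv.ofFiberEquiv fun a => Fintype.equivOfCardEq (hfiber a),
    Equiv.ofFiberEquiv_map _⟩

variable [DecidableEq ι]

theorem map_eq_of_eq_add_int_mul_two_pi {s t : ι → ℝ} (k : ι → ℤ)
    (hk : ∀ j, t j = s j + k j * (2 * π)) (hk0 : ∑ j, k j = 0)
    (hs : ∀ i j, s i - s j ≤ 2 * π) (ht : ∀ i j, t i - t j ≤ 2 * π) :
    Finset.univ.val.map t = Finset.univ.val.map s := by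
  induction h : ∑ j, (k j).natAbs using Nat.strong_induction_on generalizing s k with
  | _ N ih =>
  by_cases hk_zero : ∀ j, k j = 0
  · congr 1
    funext j
    simp [hk, hk_zero]
  obtain ⟨j₀, hj₀⟩ := not_forall.mp hk_zero
  obtain ⟨p, -, hp⟩ := Finset.exists_pos_of_sum_zero_of_exists_nonzero k hk0
    ⟨j₀, Finset.mem_univ _, hj₀⟩
  obtain ⟨q, -, hq⟩ := Finset.exists_pos_of_sum_zero_of_exists_nonzero (-k)
    (by simp [hk0]) ⟨j₀, Finset.mem_univ _, by simpa using hj₀⟩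
  simp only [Pi.neg_apply, Left.neg_pos_iff] at hq
  have hpq : p ≠ q := by rintro rfl; omega
  -- a shift by `2π (k p - k q) ≥ 4π` is only compatible with both spreads if everything is tight
  have hk_pq : k p = 1 ∧ k q = -1 := by
    have : ((k p - k q : ℤ) : ℝ) * (2 * π) ≤ 2 * (2 * π) := by
      push_cast; linarith [hk p, hk q, ht p q, hs q p]
    have : k p - k q ≤ 2 := by exact_mod_cast le_of_mul_le_mul_right this Real.two_pi_pos
    omega
  have htp' : t p = s p + 2 * π := by rw [hk p, hk_pq.1]; push_cast; ring
  have htq' : t q = s q - 2 * π := by rw [hk q, hk_pq.2]; push_cast; ring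
  have htp : t p = s q := by linarith [ht p q, hs q p]
  have htq : t q = s p := by linarith [ht p q, hs q p]
  set k' : ι → ℤ := fun m => k m - (Pi.single p 1 : ι → ℤ) m + (Pi.single q 1 : ι → ℤ) m
  have hk'_of_ne : ∀ m, m ≠ p → m ≠ q → k' m = k m := fun m hmp hmq => by
    simp [k', hmp, hmq]
  have hk'p : k' p = 0 := by simp [k', hpq, hk_pq.1]
  have hk'q : k' q = 0 := by simp [k', hpq.symm, hk_pq.2]
  have hlt : ∑ j, (k' j).natAbs < N := by
    rw [← h]
    refine Finset.sum_lt_sum (fun m _ => ?_) ⟨p, Finset.mem_univ _, by simp [hk'p]; omega⟩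
    by_cases hmp : m = p
    · simp [hmp, hk'p]
    by_cases hmq : m = q
    · simp [hmq, hk'q]
    · rw [hk'_of_ne m hmp hmq]
  have hswap : Finset.univ.val.map (s ∘ Equiv.swap p q) = Finset.univ.val.map s := by
    rw [← Multiset.map_map, Multiset.map_univ_val_equiv]
  rw [← hswap]
  refine ih _ hlt k' (fun m => ?_) ?_ (fun i j => hs _ _) rfl
  · by_cases hmp : m = p
    · simp [hmp, hk'p, htp]
    by_cases hmq : m = q
    · simp [hmq, hk'q, htq]
    · simp [hk'_of_ne m hmp hmq, Equiv.swap_apply_of_ne_of_ne hmp hmq, hk m]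
  · simp [k', Finset.sum_add_distrib, Finset.sum_sub_distrib, hk0]

theorem map_eq_of_map_exp_eq {s t : ι → ℝ} (hsum : ∑ j, s j = ∑ j, t j)
    (hs : ∀ i j, s i - s j ≤ 2 * π) (ht : ∀ i j, t i - t j ≤ 2 * π)
    (hexp : Finset.univ.val.map (fun j => exp (s j * I))
      = Finset.univ.val.map (fun j => exp (t j * I))) :
    Finset.univ.val.map s = Finset.univ.val.map t := by
  obtain ⟨σ, hσ⟩ := exists_perm_apply_eq_of_map_eq hexp
  have hshift : ∀ j, ∃ k : ℤ, t (σ j) = s j + k * (2 * π) := fun j => by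
    obtain ⟨k, hk⟩ := exp_eq_exp_iff_exists_int.mp (hσ j)
    exact ⟨k, by simpa using congrArg im hk⟩
  choose k hk using hshift
  have hk0 : ∑ j, k j = 0 := by
    have : (∑ j, (k j : ℝ)) * (2 * π) = 0 := by
      have hσsum := Equiv.sum_comp σ t
      simp only [hk, Finset.sum_add_distrib] at hσsum
      rw [Finset.sum_mul]
      linarith
    exact_mod_cast (mul_eq_zero.mp this).resolve_right Real.two_pi_pos.ne'
  calc Finset.univ.val.map s = Finset.univ.val.map (t ∘ σ) :=
        (map_eq_of_eq_add_int_mul_two_pi k hk hk0 hs fun i j => ht _ _).symm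
    _ = Finset.univ.val.map t := by rw [← Multiset.map_map, Multiset.map_univ_val_equiv]

end Combinatorics

section UnitaryConj

variable {ι : Type*}

theorem isHermitian_neg_I_smul {X : Matrix ι ι ℂ} (hX : Xᴴ = -X) : (-I • X).IsHermitian := by
  simp [IsHermitian, conjTranspose_smul, hX]

variable [Fintype ι] [DecidableEq ι]

theorem exp_unitary_conj {V : Matrix ι ι ℂ} (hV : V * Vᴴ = 1) (A : Matrix ι ι ℂ) :
    NormedSpace.exp (V * A * Vᴴ) = V * NormedSpace.exp A * Vᴴ := by
  have hV' : Vᴴ * V = 1 := mul_eq_one_comm.mp hV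
  rw [← inv_eq_right_inv hV]
  exact Matrix.exp_conj V A ⟨⟨V, Vᴴ, hV, hV'⟩, rfl⟩

theorem exp_unitary_conj_diagonal {V : Matrix ι ι ℂ} (hV : V * Vᴴ = 1) (d : ι → ℂ) :
    NormedSpace.exp (V * diagonal d * Vᴴ) = V * diagonal (fun j => exp (d j)) * Vᴴ := by
  rw [exp_unitary_conj hV, Matrix.exp_diagonal, exp_eq_exp_ℂ, Pi.exp_def]

theorem commute_of_exp_unitary_conj_eq {U X Q : Matrix ι ι ℂ} (hU : U * Uᴴ = 1)
    (hX : NormedSpace.exp X = Q) (hUX : NormedSpace.exp (U * X * Uᴴ) = Q) : U * Q = Q * U := by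
  rw [exp_unitary_conj hU, hX] at hUX
  calc U * Q = U * Q * Uᴴ * U := by rw [mul_assoc _ Uᴴ, mul_eq_one_comm.mp hU, mul_one]
    _ = Q * U := by rw [hUX]

theorem charpoly_unitary_conj {V : Matrix ι ι ℂ} (hV : V * Vᴴ = 1) (A : Matrix ι ι ℂ) :
    (V * A * Vᴴ).charpoly = A.charpoly := by
  rw [charpoly_mul_comm, ← mul_assoc, mul_eq_one_comm.mp hV, one_mul]

theorem roots_charpoly_unitary_conj_diagonal {V : Matrix ι ι ℂ} (hV : V * Vᴴ = 1) (d : ι → ℂ) :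
    (V * diagonal d * Vᴴ).charpoly.roots = Finset.univ.val.map d := by
  rw [charpoly_unitary_conj hV, charpoly_diagonal, ← Finset.prod_map_val]
  exact (congrArg (fun m => m.prod.roots) (Multiset.map_map (fun a => X - C a) d _)).symm.trans
    (roots_multiset_prod_X_sub_C _)

theorem eq_unitary_conj_diagonal {X : Matrix ι ι ℂ} (hH : (-I • X).IsHermitian) :
    X = (hH.eigenvectorUnitary : Matrix ι ι ℂ)
      * diagonal (fun j => hH.eigenvalues j * I) * (hH.eigenvectorUnitary : Matrix ι ι ℂ)ᴴ := by
  have h := congrArg (I • ·) hH.spectral_theorem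
  simp only [smul_smul, mul_neg, I_mul_I, neg_neg, one_smul] at h
  refine h.trans ?_
  rw [Unitary.conjStarAlgAut_apply, star_eq_conjTranspose, ← Matrix.smul_mul, ← Matrix.mul_smul,
    ← diagonal_smul]
  congr 3
  funext j
  simp [mul_comm]

theorem eigenvectorUnitary_mul_conjTranspose {A : Matrix ι ι ℂ} (hA : A.IsHermitian) :
    (hA.eigenvectorUnitary : Matrix ι ι ℂ) * (hA.eigenvectorUnitary : Matrix ι ι ℂ)ᴴ = 1 :=
  mem_unitaryGroup_iff.mp hA.eigenvectorUnitary.2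

theorem exp_eq_unitary_conj_diagonal {X : Matrix ι ι ℂ} (hH : (-I • X).IsHermitian) :
    NormedSpace.exp X = (hH.eigenvectorUnitary : Matrix ι ι ℂ)
      * diagonal (fun j => exp (hH.eigenvalues j * I))
      * (hH.eigenvectorUnitary : Matrix ι ι ℂ)ᴴ :=
  (congrArg NormedSpace.exp (eq_unitary_conj_diagonal hH)).trans <|
    exp_unitary_conj_diagonal (eigenvectorUnitary_mul_conjTranspose hH) _

theorem roots_charpoly_eq_map_exp_eigenvalues {Q X : Matrix ι ι ℂ}
    (hX : NormedSpace.exp X = Q) (hH : (-I • X).IsHermitian) :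
    Q.charpoly.roots = Finset.univ.val.map (fun j => exp (hH.eigenvalues j * I)) := by
  rw [← hX, exp_eq_unitary_conj_diagonal hH,
    roots_charpoly_unitary_conj_diagonal (eigenvectorUnitary_mul_conjTranspose hH)]

theorem exists_unitary_conj_of_eigenvalues_eq {X Y : Matrix ι ι ℂ} (hX : (-I • X).IsHermitian)
    (hY : (-I • Y).IsHermitian) (h : hX.eigenvalues = hY.eigenvalues) :
    ∃ U : Matrix ι ι ℂ, U * Uᴴ = 1 ∧ Y = U * X * Uᴴ := by
  have hW := eigenvectorUnitary_mul_conjTranspose hY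
  have hV := mul_eq_one_comm.mp (eigenvectorUnitary_mul_conjTranspose hX)
  have hXd := eq_unitary_conj_diagonal hX
  have hYd := eq_unitary_conj_diagonal hY
  rw [← h] at hYd
  generalize (hX.eigenvectorUnitary : Matrix ι ι ℂ) = V at hV hXd
  generalize (hY.eigenvectorUnitary : Matrix ι ι ℂ) = W at hW hYd
  refine ⟨W * Vᴴ, ?_, ?_⟩
  · simp only [conjTranspose_mul, conjTranspose_conjTranspose, mul_assoc]
    rw [← mul_assoc Vᴴ, hV, one_mul, hW]
  · rw [hXd, hYd]
    simp only [conjTranspose_mul, conjTranspose_conjTranspose, mul_assoc]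
    rw [← mul_assoc Vᴴ V, hV, one_mul, ← mul_assoc Vᴴ V, hV, one_mul]

end UnitaryConj

section MinimalLogarithms

variable {n : ℕ}

theorem frobSq_unitary_conj {V : Matrix (Fin n) (Fin n) ℂ} (hV : V * Vᴴ = 1)
    (A : Matrix (Fin n) (Fin n) ℂ) : frobSq (V * A * Vᴴ) = frobSq A := by
  have hV' : Vᴴ * V = 1 := mul_eq_one_comm.mp hV
  simp only [frobSq, conjTranspose_mul, conjTranspose_conjTranspose, mul_assoc]
  rw [← mul_assoc Vᴴ V, hV', one_mul, trace_mul_comm, mul_assoc, mul_assoc, hV', mul_one]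

theorem frobSq_diagonal (d : Fin n → ℂ) : frobSq (diagonal d) = ∑ j, normSq (d j) := by
  simp [frobSq, diagonal_conjTranspose, trace_diagonal, mul_conj]

theorem unitary_conj_mem_suSet {V X : Matrix (Fin n) (Fin n) ℂ} (hV : V * Vᴴ = 1)
    (hX : X ∈ suSet n) : V * X * Vᴴ ∈ suSet n := by
  refine ⟨?_, ?_⟩
  · simp [conjTranspose_mul, mul_assoc, hX.1]
  · rw [trace_mul_cycle, mul_eq_one_comm.mp hV, one_mul, hX.2]

theorem frobSq_nonneg (X : Matrix (Fin n) (Fin n) ℂ) : 0 ≤ frobSq X := by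
  simp only [frobSq, trace, diag_apply, mul_apply, conjTranspose_apply, re_sum]
  exact Finset.sum_nonneg fun i _ => Finset.sum_nonneg fun j _ => by
    rw [star_def, mul_conj, ofReal_re]; exact normSq_nonneg _

theorem mQ_le_frobSq {Q X : Matrix (Fin n) (Fin n) ℂ} (hX : X ∈ suSet n)
    (hQ : NormedSpace.exp X = Q) : mQ Q ≤ frobSq X :=
  csInf_le ⟨0, fun _ ⟨Y, _, _, hY⟩ => hY ▸ frobSq_nonneg Y⟩ ⟨X, hX, hQ, rfl⟩

theorem diagonal_ofReal_mul_I_mem_suSet {t : Fin n → ℝ} (ht : ∑ j, t j = 0) :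
    diagonal (fun j => (t j : ℂ) * I) ∈ suSet n := by
  refine ⟨?_, ?_⟩
  · ext i j
    by_cases h : i = j
    · simp [h]
    · simp [h, Ne.symm h]
  · simp [trace_diagonal, ← Finset.sum_mul, ← ofReal_sum, ht]

theorem frobSq_diagonal_ofReal_mul_I (t : Fin n → ℝ) :
    frobSq (diagonal (fun j => (t j : ℂ) * I)) = ∑ j, t j ^ 2 := by
  simp [frobSq_diagonal, normSq_mul, sq]

section SpectralData

variable {X : Matrix (Fin n) (Fin n) ℂ} (hH : (-I • X).IsHermitian)
include hH

theorem sum_eigenvalues_eq_zero (hX : X ∈ suSet n) : ∑ j, hH.eigenvalues j = 0 := by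
  have h := hH.trace_eq_sum_eigenvalues
  rw [trace_smul, hX.2, smul_zero] at h
  exact RCLike.ofReal_eq_zero.mp ((RCLike.ofReal_sum _ _).trans h.symm)

theorem frobSq_eq_sum_sq_eigenvalues : frobSq X = ∑ j, hH.eigenvalues j ^ 2 :=
  (congrArg frobSq (eq_unitary_conj_diagonal hH)).trans <| by
    rw [frobSq_unitary_conj (eigenvectorUnitary_mul_conjTranspose hH),
      frobSq_diagonal_ofReal_mul_I]
end SpectralData

end MinimalLogarithms

section ThetaQ

variable {n : ℕ} {Q : Matrix (Fin n) (Fin n) ℂ}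

theorem eigenvalues_sub_le_two_pi_of_mem_ThetaQ {X : Matrix (Fin n) (Fin n) ℂ} (hX : X ∈ ThetaQ Q)
    (hH : (-I • X).IsHermitian) (i j : Fin n) :
    hH.eigenvalues i - hH.eigenvalues j ≤ 2 * π := by
  set e := hH.eigenvalues
  set V := (hH.eigenvectorUnitary : Matrix (Fin n) (Fin n) ℂ)
  have hV : V * Vᴴ = 1 := eigenvectorUnitary_mul_conjTranspose hH
  by_contra! hij
  have hne : i ≠ j := by rintro rfl; linarith [Real.two_pi_pos]
  -- lowering `e i` and raising `e j` by `2π` keeps the trace and the exponential, but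
  -- decreases the norm
  set k : Fin n → ℤ := Pi.single j 1 - Pi.single i 1
  set t : Fin n → ℝ := fun m => e m + k m * (2 * π)
  have hki : k i = -1 := by simp [k, hne]
  have hkj : k j = 1 := by simp [k, hne.symm]
  have hk_off : ∀ m, m ≠ i ∧ m ≠ j → k m = 0 := fun m ⟨hmi, hmj⟩ => by simp [k, hmi, hmj]
  have hsum : ∑ m, t m = 0 := by
    have : ∑ m, (t m - e m) = 0 := by
      rw [Fintype.sum_eq_add i j hne fun m hm => by simp [t, hk_off m hm]]
      simp [t, hki, hkj]
    rwa [Finset.sum_sub_distrib, sum_eigenvalues_eq_zero hH hX.1, sub_zero] at this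
  have hsq : ∑ m, t m ^ 2 = ∑ m, e m ^ 2 - 4 * π * (e i - e j) + 8 * π ^ 2 := by
    have : ∑ m, (t m ^ 2 - e m ^ 2) = -4 * π * (e i - e j) + 8 * π ^ 2 := by
      rw [Fintype.sum_eq_add i j hne fun m hm => by simp [t, hk_off m hm]]
      simp only [t, hki, hkj]
      push_cast
      ring
    rw [Finset.sum_sub_distrib] at this
    linarith
  have hexp : NormedSpace.exp (V * diagonal (fun m => (t m : ℂ) * I) * Vᴴ) = Q := by
    rw [← hX.2.1, exp_eq_unitary_conj_diagonal hH, exp_unitary_conj_diagonal hV]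
    congr 3
    funext m
    exact exp_eq_exp_iff_exists_int.mpr ⟨k m, by push_cast [t]; ring⟩
  have hmin := mQ_le_frobSq (unitary_conj_mem_suSet hV (diagonal_ofReal_mul_I_mem_suSet hsum)) hexp
  rw [frobSq_unitary_conj hV, frobSq_diagonal_ofReal_mul_I, hsq, ← hX.2.2,
    frobSq_eq_sum_sq_eigenvalues hH] at hmin
  nlinarith [Real.pi_pos]

theorem eigenvalues_eq_of_mem_ThetaQ {X Y : Matrix (Fin n) (Fin n) ℂ} (hX : X ∈ ThetaQ Q)
    (hY : Y ∈ ThetaQ Q) (hHX : (-I • X).IsHermitian) (hHY : (-I • Y).IsHermitian) :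
    hHX.eigenvalues = hHY.eigenvalues := by
  have hmap : Finset.univ.val.map hHX.eigenvalues = Finset.univ.val.map hHY.eigenvalues := by
    refine map_eq_of_map_exp_eq ?_ (eigenvalues_sub_le_two_pi_of_mem_ThetaQ hX hHX)
      (eigenvalues_sub_le_two_pi_of_mem_ThetaQ hY hHY) ?_
    · rw [sum_eigenvalues_eq_zero hHX hX.1, sum_eigenvalues_eq_zero hHY hY.1]
    · rw [← roots_charpoly_eq_map_exp_eigenvalues hX.2.1,
        roots_charpoly_eq_map_exp_eigenvalues hY.2.1]
  rw [hHX.eigenvalues_eq_eigenvalues_iff hHY, hHX.charpoly_eq, hHY.charpoly_eq,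
    ← Finset.prod_map_val, ← Finset.prod_map_val]
  have := congrArg (fun m => (m.map fun a : ℝ => Polynomial.X - C (a : ℂ)).prod) hmap
  simp only [Multiset.map_map] at this
  exact this

theorem unitary_conj_mem_ThetaQ {U X : Matrix (Fin n) (Fin n) ℂ} (hU : U * Uᴴ = 1)
    (hUQ : U * Q = Q * U) (hX : X ∈ ThetaQ Q) : U * X * Uᴴ ∈ ThetaQ Q :=
  ⟨unitary_conj_mem_suSet hU hX.1,
    by rw [exp_unitary_conj hU, hX.2.1, hUQ, mul_assoc, hU, mul_one],
    by rw [frobSq_unitary_conj hU, hX.2.2]⟩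

end ThetaQ

theorem stmt_14_general (n : ℕ) (Q : Matrix (Fin n) (Fin n) ℂ)
    (X₀ : Matrix (Fin n) (Fin n) ℂ) (hX₀ : X₀ ∈ ThetaQ Q) :
    ThetaQ Q = {Y | ∃ U : Matrix (Fin n) (Fin n) ℂ,
      U * Uᴴ = 1 ∧ U * Q = Q * U ∧ Y = U * X₀ * Uᴴ} := by
  ext Y
  constructor
  · intro hY
    have hH₀ := isHermitian_neg_I_smul hX₀.1.1
    have hHY := isHermitian_neg_I_smul hY.1.1
    obtain ⟨U, hU, rfl⟩ := exists_unitary_conj_of_eigenvalues_eq hH₀ hHY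
      (eigenvalues_eq_of_mem_ThetaQ hX₀ hY hH₀ hHY)
    exact ⟨U, hU, commute_of_exp_unitary_conj_eq hU hX₀.2.1 hY.2.1, rfl⟩
  · rintro ⟨U, hU, hUQ, rfl⟩
    exact unitary_conj_mem_ThetaQ hU hUQ hX₀

/-- if `ζ(Q) ≥ 0` and `X₀ ∈ Θ(Q)`, then `Θ(Q)` is the orbit of `X₀`
under conjugation by unitary matrices commuting with `Q`. -/
theorem stmt_14 (n : ℕ) (hn : 2 ≤ n) (Q : Matrix (Fin n) (Fin n) ℂ)
    (hQ : Q ∈ SpecialUnitary n) (μ : Fin n → ℂ)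
    (hμ : Q.charpoly.roots = Multiset.map μ Finset.univ.val)
    (hζ : 0 ≤ ∑ j, (μ j).arg)
    (X₀ : Matrix (Fin n) (Fin n) ℂ) (hX₀ : X₀ ∈ ThetaQ Q) :
    ThetaQ Q = {Y | ∃ U : Matrix (Fin n) (Fin n) ℂ,
      U * Uᴴ = 1 ∧ U * Q = Q * U ∧ Y = U * X₀ * Uᴴ} :=
  stmt_14_general n Q X₀ hX₀
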